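/- arXiv:2202.09364 — 4 statements merged into one kernel-verified Lean document; each statement's English description precedes it below -/
import Mathlib

section
/- There exists a finite 3-player game G and no-regret strategies σ_1, σ_2 for the two learners such that for every strategy of the optimizer (player 3, who has a single action), the optimizer's expected average utility is 0, strictly less than the pure optimistic Stackelberg value V_pure = 1 of G. Concretely, in the game with A_1 = {T,B}, A_2 = {L,R}, A_3 = {E} and payoffs u(T,L) = (1,1,0), u(T,R) = (0,0,0), u(B,L) = (0,0,−1), u(B,R) = (1,1,1), the learners' strategies from the regret-matching construction (starting at T and L, breaking ties toward T and L) play (T,L) at every stage, giving the optimizer average utility 0 while V_pure = 1. -/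
open MeasureTheory Filter Finset

noncomputable section

/-- Learners' coordination utility in the game of Counterexample 1:
payoff 1 on (T,L) and (B,R), else 0. `T`,`L` are `true`; `B`,`R` are `false`. -/
def uL (a b : Bool) : ℝ := if a = b then 1 else 0

/-- Optimizer's utility: `u3(T,L)=0, u3(T,R)=0, u3(B,L)=-1, u3(B,R)=1`. -/
def u3 (p : Bool × Bool) : ℝ :=
  if p = (false, false) then 1 else if p = (false, true) then -1 else 0

/-- `r̄ᵗ_{T,B}` of player 1 from a history of length `t`. -/
def rTB {t : ℕ} (h : Fin t → Bool × Bool) : ℝ :=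
  (∑ m, if (h m).1 = true then (if (h m).2 = false then (1 : ℝ) else -1) else 0) / t

/-- `r̄ᵗ_{B,T}` of player 1. -/
def rBT {t : ℕ} (h : Fin t → Bool × Bool) : ℝ :=
  (∑ m, if (h m).1 = false then (if (h m).2 = true then (1 : ℝ) else -1) else 0) / t

/-- `r̄ᵗ_{L,R}` of player 2. -/
def rLR {t : ℕ} (h : Fin t → Bool × Bool) : ℝ :=
  (∑ m, if (h m).2 = true then (if (h m).1 = false then (1 : ℝ) else -1) else 0) / t

/-- `r̄ᵗ_{R,L}` of player 2. -/
def rRL {t : ℕ} (h : Fin t → Bool × Bool) : ℝ :=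
  (∑ m, if (h m).2 = false then (if (h m).1 = true then (1 : ℝ) else -1) else 0) / t

/-- Player 1's regret-matching strategy, starting with `T` and breaking
arbitrary choices towards `T` (`p = 1`). -/
def P1 (t : ℕ) (h : Fin t → Bool × Bool) : ℝ :=
  if max (rTB h) 0 + max (rBT h) 0 = 0 then 1
  else max (rBT h) 0 / (max (rTB h) 0 + max (rBT h) 0)

/-- Player 2's regret-matching strategy, starting with `L` and breaking
arbitrary choices towards `L` (`p = 1`). -/
def P2 (t : ℕ) (h : Fin t → Bool × Bool) : ℝ :=
  if max (rLR h) 0 + max (rRL h) 0 = 0 then 1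
  else max (rRL h) 0 / (max (rLR h) 0 + max (rRL h) 0)

/-- `play` is consistent with player 1 following `σ` (probability of `T`). -/
def Follows1 {Ω : Type} [MeasurableSpace Ω] (μ : Measure Ω)
    (play : ℕ → Ω → Bool × Bool)
    (σ : (t : ℕ) → (Fin t → Bool × Bool) → ℝ) : Prop :=
  ∀ (t : ℕ) (f : (Fin t → Bool × Bool) → Bool → ℝ),
    ∫ ω, (if (play t ω).1 = true then (1 : ℝ) else 0) *
        f (fun s => play s.1 ω) (play t ω).2 ∂μ
      = ∫ ω, σ t (fun s => play s.1 ω) * f (fun s => play s.1 ω) (play t ω).2 ∂μ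

/-- `play` is consistent with player 2 following `σ` (probability of `L`). -/
def Follows2 {Ω : Type} [MeasurableSpace Ω] (μ : Measure Ω)
    (play : ℕ → Ω → Bool × Bool)
    (σ : (t : ℕ) → (Fin t → Bool × Bool) → ℝ) : Prop :=
  ∀ (t : ℕ) (f : (Fin t → Bool × Bool) → Bool → ℝ),
    ∫ ω, (if (play t ω).2 = true then (1 : ℝ) else 0) *
        f (fun s => play s.1 ω) (play t ω).1 ∂μ
      = ∫ ω, σ t (fun s => play s.1 ω) * f (fun s => play s.1 ω) (play t ω).1 ∂μ

/-- A strategy `σ` of player 1 has no (external) regret: against every opposing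
behavior, the positive part of the average external regret vanishes a.s. -/
def NoRegret1 (σ : (t : ℕ) → (Fin t → Bool × Bool) → ℝ) : Prop :=
  ∀ (Ω : Type) (_ : MeasurableSpace Ω) (μ : Measure Ω), IsProbabilityMeasure μ →
    ∀ play : ℕ → Ω → Bool × Bool, (∀ t, Measurable (play t)) →
      Follows1 μ play σ →
      ∀ b : Bool, ∀ᵐ ω ∂μ, Tendsto
        (fun M : ℕ => max ((∑ t ∈ Finset.range M,
          (uL b (play t ω).2 - uL (play t ω).1 (play t ω).2)) / M) 0)
        atTop (nhds 0)

/-- Same for player 2. -/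
def NoRegret2 (σ : (t : ℕ) → (Fin t → Bool × Bool) → ℝ) : Prop :=
  ∀ (Ω : Type) (_ : MeasurableSpace Ω) (μ : Measure Ω), IsProbabilityMeasure μ →
    ∀ play : ℕ → Ω → Bool × Bool, (∀ t, Measurable (play t)) →
      Follows2 μ play σ →
      ∀ b : Bool, ∀ᵐ ω ∂μ, Tendsto
        (fun M : ℕ => max ((∑ t ∈ Finset.range M,
          (uL (play t ω).1 b - uL (play t ω).1 (play t ω).2)) / M) 0)
        atTop (nhds 0)

/-! Let `R^b_t` be player 1's cumulative regret for not having played `b` in the first `t`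
rounds. Regret matching picks `T` with probability `(R^T)⁺ / ((R^T)⁺ + (R^B)⁺)`, which is exactly
Blackwell's condition: the cross term of the potential `Φ_t = Σ_b ((R^b_t)⁺)²` has conditional
mean zero, so `E Φ_t ≤ 2t` whatever the opponent does. Chebyshev along the squares `t = k²` and
Borel–Cantelli give `(R^b_{k²})⁺ / k² → 0` a.s., and since regrets grow by at most one per round
this fills the gaps between squares. Player 2's strategy is player 1's with the roles swapped.
Played against each other, both start at `(T, L)` and never acquire a positive regret, so they stay
at `(T, L)` forever, where the optimizer earns `0`; yet `(B, R)` is a pure equilibrium worth `1` to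
the optimizer. -/

open scoped Topology

section Asymptotics

theorem sq_max_add_zero_le (c i : ℝ) : max (c + i) 0 ^ 2 ≤ (max c 0 + i) ^ 2 := by
  rcases le_or_gt (c + i) 0 with h | h
  · simpa [max_eq_right h] using sq_nonneg (max c 0 + i)
  · rw [max_eq_left h.le]
    exact pow_le_pow_left₀ h.le (by linarith [le_max_left c 0]) 2

theorem tendsto_max_zero_div_of_tendsto_sq {C : ℕ → ℝ} (hstep : ∀ n, C (n + 1) ≤ C n + 1)
    (hsq : Tendsto (fun k : ℕ => max (C (k ^ 2)) 0 / (k : ℝ) ^ 2) atTop (𝓝 0)) :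
    Tendsto (fun M : ℕ => max (C M) 0 / M) atTop (𝓝 0) := by
  have hgrowth : ∀ n d : ℕ, C (n + d) ≤ C n + d := by
    intro n d
    induction d with
    | zero => simp
    | succ d ih => rw [← add_assoc]; push_cast; linarith [hstep (n + d)]
  have hsqrt : Tendsto Nat.sqrt atTop atTop :=
    tendsto_atTop_atTop.2 fun b => ⟨b * b, fun _ h => Nat.le_sqrt.2 h⟩
  have hupper : Tendsto (fun M : ℕ => max (C (M.sqrt ^ 2)) 0 / (M.sqrt : ℝ) ^ 2 + 2 / M.sqrt)
      atTop (𝓝 0) := by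
    have := (hsq.add (tendsto_const_div_atTop_nhds_zero_nat 2)).comp hsqrt
    rw [add_zero] at this
    exact this
  refine squeeze_zero' (Eventually.of_forall fun M => by positivity) ?_ hupper
  filter_upwards [eventually_ge_atTop 1] with M hM
  have hk : (0 : ℝ) < M.sqrt := by exact_mod_cast Nat.sqrt_pos.2 hM
  have hkM : M.sqrt ^ 2 ≤ M := Nat.sqrt_le' M
  have hMk : M < (M.sqrt + 1) ^ 2 := Nat.lt_succ_sqrt' M
  generalize M.sqrt = k at *
  -- `M = k² + d` with `d ≤ 2k`, so `C M ≤ C (k²) + 2k`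
  obtain ⟨d, rfl⟩ := Nat.exists_eq_add_of_le hkM
  have hd : (d : ℝ) ≤ 2 * k := by exact_mod_cast (by nlinarith : d ≤ 2 * k)
  have hmax : max (C (k ^ 2 + d)) 0 ≤ max (C (k ^ 2)) 0 + 2 * k :=
    max_le (by linarith [hgrowth (k ^ 2) d, le_max_left (C (k ^ 2)) 0]) (by positivity)
  calc max (C (k ^ 2 + d)) 0 / ((k ^ 2 + d : ℕ) : ℝ)
      ≤ (max (C (k ^ 2)) 0 + 2 * k) / (k : ℝ) ^ 2 := by
        gcongr
        push_cast
        linarith [d.cast_nonneg (α := ℝ)]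
    _ = max (C (k ^ 2)) 0 / (k : ℝ) ^ 2 + 2 / k := by field_simp

variable {Ω : Type*} [MeasurableSpace Ω] {μ : Measure Ω}

theorem ae_tendsto_zero_of_summable_integral_norm {E : Type*} [NormedAddCommGroup E]
    {f : ℕ → Ω → E} (hf : ∀ n, Integrable (f n) μ)
    (hs : Summable fun n => ∫ ω, ‖f n ω‖ ∂μ) :
    ∀ᵐ ω ∂μ, Tendsto (fun n => f n ω) atTop (𝓝 0) := by
  have hsum : ∑' n, eLpNorm (f n) 1 μ ≠ ⊤ := by
    simp_rw [eLpNorm_one_eq_lintegral_enorm, ← ofReal_integral_norm_eq_lintegral_enorm (hf _)]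
    rw [← ENNReal.ofReal_tsum_of_nonneg (fun n => integral_nonneg fun _ => norm_nonneg _) hs]
    exact ENNReal.ofReal_ne_top
  filter_upwards [summable_norm_of_tsum_eLpNorm_ne_top le_rfl
    (fun n => (hf n).aestronglyMeasurable) hsum] with ω hω
  exact tendsto_zero_iff_norm_tendsto_zero.2 hω.tendsto_atTop_zero

theorem ae_tendsto_max_zero_div_of_integral_sq_le {C : ℕ → Ω → ℝ} {c : ℝ}
    (hint : ∀ n, Integrable (fun ω => max (C n ω) 0 ^ 2) μ)
    (hstep : ∀ n ω, C (n + 1) ω ≤ C n ω + 1)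
    (hbound : ∀ n : ℕ, ∫ ω, max (C n ω) 0 ^ 2 ∂μ ≤ c * n) :
    ∀ᵐ ω ∂μ, Tendsto (fun M : ℕ => max (C M ω) 0 / M) atTop (𝓝 0) := by
  set q : ℕ → Ω → ℝ := fun k ω => max (C (k ^ 2) ω) 0 / (k : ℝ) ^ 2
  have hq0 : ∀ k ω, 0 ≤ q k ω := fun k ω => by positivity
  have hqint : ∀ k, Integrable (fun ω => q k ω ^ 2) μ := fun k => by
    simpa only [q, div_pow] using (hint (k ^ 2)).div_const _
  -- `E[q_k²] ≤ c / k²`, which is summable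
  have hqsum : Summable fun k => ∫ ω, ‖q k ω ^ 2‖ ∂μ := by
    refine Summable.of_nonneg_of_le (fun k => integral_nonneg fun _ => norm_nonneg _)
      (fun k => ?_) ((Real.summable_nat_pow_inv.2 one_lt_two).mul_left c)
    have hnorm : ∀ ω, ‖q k ω ^ 2‖ = max (C (k ^ 2) ω) 0 ^ 2 / ((k : ℝ) ^ 2) ^ 2 := fun ω => by
      rw [Real.norm_of_nonneg (by positivity), div_pow]
    simp_rw [hnorm, integral_div]
    calc (∫ ω, max (C (k ^ 2) ω) 0 ^ 2 ∂μ) / ((k : ℝ) ^ 2) ^ 2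
        ≤ c * (k : ℝ) ^ 2 / ((k : ℝ) ^ 2) ^ 2 := by
          gcongr
          exact_mod_cast hbound (k ^ 2)
      _ = c * ((k : ℝ) ^ 2)⁻¹ := by rw [mul_div_assoc, sq ((k : ℝ) ^ 2), div_self_mul_self']
  filter_upwards [ae_tendsto_zero_of_summable_integral_norm hqint hqsum] with ω hω
  refine tendsto_max_zero_div_of_tendsto_sq (hstep · ω) ?_
  simpa [Real.sqrt_sq (hq0 _ ω)] using hω.sqrt

end Asymptotics

namespace RegretMatching

def switchGain (b : Bool) (p : Bool × Bool) : ℝ := uL b p.2 - uL p.1 p.2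

theorem abs_switchGain_le_one (b : Bool) (p : Bool × Bool) : |switchGain b p| ≤ 1 := by
  rcases p with ⟨x, y⟩
  cases b <;> cases x <;> cases y <;> norm_num [switchGain, uL]

def histRegret (b : Bool) {t : ℕ} (h : Fin t → Bool × Bool) : ℝ := ∑ m, switchGain b (h m)

theorem rTB_eq {t : ℕ} (h : Fin t → Bool × Bool) : rTB h = histRegret false h / t := by
  refine congrArg (· / (t : ℝ)) (sum_congr rfl fun m _ => ?_)
  rcases h m with ⟨x, y⟩
  cases x <;> cases y <;> norm_num [switchGain, uL]

theorem rBT_eq {t : ℕ} (h : Fin t → Bool × Bool) : rBT h = histRegret true h / t := by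
  refine congrArg (· / (t : ℝ)) (sum_congr rfl fun m _ => ?_)
  rcases h m with ⟨x, y⟩
  cases x <;> cases y <;> norm_num [switchGain, uL]

theorem P1_mul_add {t : ℕ} (h : Fin t → Bool × Bool) :
    P1 t h * (max (histRegret false h) 0 + max (histRegret true h) 0) =
      max (histRegret true h) 0 := by
  set S := max (histRegret false h) 0
  set T := max (histRegret true h) 0
  have hS : max (rTB h) 0 = S / t := by
    rw [rTB_eq, ← max_div_div_right t.cast_nonneg, zero_div]
  have hT : max (rBT h) 0 = T / t := by
    rw [rBT_eq, ← max_div_div_right t.cast_nonneg, zero_div]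
  rcases eq_or_ne (S + T) 0 with hST | hST
  · rw [hST, mul_zero]
    linarith [le_max_right (histRegret false h) 0, le_max_right (histRegret true h) 0]
  · have ht : (t : ℝ) ≠ 0 := by
      rintro ht
      obtain rfl : t = 0 := by exact_mod_cast ht
      simp [S, T, histRegret] at hST
    rw [P1, hS, hT, ← add_div, if_neg (div_ne_zero hST ht), div_div_div_cancel_right₀ ht,
      div_mul_cancel₀ _ hST]

theorem P1_const_true_true (t : ℕ) : P1 t (fun _ => (true, true)) = 1 := by
  simp [P1, rTB_eq, rBT_eq, histRegret, switchGain, uL, neg_div, div_nonneg]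

section Play

variable {Ω : Type} {play : ℕ → Ω → Bool × Bool}

def history (play : ℕ → Ω → Bool × Bool) (t : ℕ) (ω : Ω) : Fin t → Bool × Bool :=
  fun s => play s ω

def cumRegret (b : Bool) (play : ℕ → Ω → Bool × Bool) (t : ℕ) (ω : Ω) : ℝ :=
  ∑ s ∈ range t, switchGain b (play s ω)

theorem cumRegret_eq_histRegret (b : Bool) (t : ℕ) (ω : Ω) :
    cumRegret b play t ω = histRegret b (history play t ω) :=
  (Fin.sum_univ_eq_sum_range (fun s => switchGain b (play s ω)) t).symm

def potential (play : ℕ → Ω → Bool × Bool) (t : ℕ) (ω : Ω) : ℝ :=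
  ∑ b : Bool, max (cumRegret b play t ω) 0 ^ 2

def drift (play : ℕ → Ω → Bool × Bool) (t : ℕ) (ω : Ω) : ℝ :=
  ∑ b : Bool, max (cumRegret b play t ω) 0 * switchGain b (play t ω)

theorem potential_succ_le (t : ℕ) (ω : Ω) :
    potential play (t + 1) ω ≤ potential play t ω + 2 * drift play t ω + 2 := by
  have hb : ∀ b, max (cumRegret b play (t + 1) ω) 0 ^ 2 ≤ max (cumRegret b play t ω) 0 ^ 2 +
      2 * (max (cumRegret b play t ω) 0 * switchGain b (play t ω)) + 1 := fun b => by
    have hsq := sq_max_add_zero_le (cumRegret b play t ω) (switchGain b (play t ω))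
    have hg := (sq_le_one_iff_abs_le_one _).2 (abs_switchGain_le_one b (play t ω))
    rw [cumRegret, sum_range_succ, ← cumRegret]
    nlinarith
  simp only [potential, drift, Fintype.sum_bool]
  linarith [hb true, hb false]

variable [MeasurableSpace Ω] {μ : Measure Ω}

theorem integrable_comp_history [IsFiniteMeasure μ] (hm : ∀ t, Measurable (play t)) (t : ℕ)
    (φ : (Fin t → Bool × Bool) × (Bool × Bool) → ℝ) :
    Integrable (fun ω => φ (history play t ω, play t ω)) μ :=
  Integrable.of_finite.comp_measurable
    ((show Measurable (history play t) from measurable_pi_lambda _ fun s => hm s).prodMk (hm t))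

theorem integral_drift_eq_zero [IsFiniteMeasure μ] (hm : ∀ t, Measurable (play t))
    (hF : Follows1 μ play P1) (t : ℕ) : ∫ ω, drift play t ω ∂μ = 0 := by
  set f : (Fin t → Bool × Bool) → Bool → ℝ := fun h y =>
    (max (histRegret false h) 0 + max (histRegret true h) 0) * switchGain false (true, y)
  have hdrift : ∀ ω, drift play t ω =
      (if (play t ω).1 = true then 1 else 0) * f (history play t ω) (play t ω).2 -
        P1 t (history play t ω) * f (history play t ω) (play t ω).2 := fun ω => by
    simp only [f, ← mul_assoc, P1_mul_add, drift, Fintype.sum_bool, cumRegret_eq_histRegret]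
    rcases play t ω with ⟨x, y⟩
    cases x <;> cases y <;> norm_num [switchGain, uL]
  calc ∫ ω, drift play t ω ∂μ
      = ∫ ω, ((if (play t ω).1 = true then 1 else 0) * f (history play t ω) (play t ω).2 -
          P1 t (history play t ω) * f (history play t ω) (play t ω).2) ∂μ :=
        integral_congr_ae (ae_of_all _ hdrift)
    _ = 0 := by
        rw [integral_sub
          (integrable_comp_history hm t fun q => (if q.2.1 = true then 1 else 0) * f q.1 q.2.2)
          (integrable_comp_history hm t fun q => P1 t q.1 * f q.1 q.2.2), sub_eq_zero]
        exact hF t f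

theorem integrable_max_cumRegret_sq [IsFiniteMeasure μ] (hm : ∀ t, Measurable (play t))
    (b : Bool) (t : ℕ) : Integrable (fun ω => max (cumRegret b play t ω) 0 ^ 2) μ := by
  simp only [cumRegret_eq_histRegret]
  exact integrable_comp_history hm t fun q => max (histRegret b q.1) 0 ^ 2

theorem integral_potential_le [IsProbabilityMeasure μ] (hm : ∀ t, Measurable (play t))
    (hF : Follows1 μ play P1) (t : ℕ) : ∫ ω, potential play t ω ∂μ ≤ 2 * t := by
  have hΦ : ∀ t, Integrable (potential play t) μ := fun t =>
    integrable_finsetSum _ fun b _ => integrable_max_cumRegret_sq hm b t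
  have hD : ∀ t, Integrable (drift play t) μ := fun t => by
    change Integrable (fun ω => drift play t ω) μ
    simp only [drift, cumRegret_eq_histRegret]
    exact integrable_comp_history hm t fun q =>
      ∑ b : Bool, max (histRegret b q.1) 0 * switchGain b q.2
  induction t with
  | zero => simp [potential, cumRegret]
  | succ t ih =>
    have hΦD : Integrable (fun ω => potential play t ω + 2 * drift play t ω) μ :=
      (hΦ t).add ((hD t).const_mul 2)
    calc ∫ ω, potential play (t + 1) ω ∂μ
        ≤ ∫ ω, (potential play t ω + 2 * drift play t ω + 2) ∂μ :=
          integral_mono (hΦ (t + 1)) (hΦD.add (integrable_const 2)) (potential_succ_le t)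
      _ = ∫ ω, potential play t ω ∂μ + 2 * ∫ ω, drift play t ω ∂μ + 2 := by
          rw [integral_add hΦD (integrable_const 2), integral_add (hΦ t) ((hD t).const_mul 2),
            integral_const_mul]
          simp
      _ ≤ 2 * (t + 1 : ℕ) := by
          rw [integral_drift_eq_zero hm hF]
          push_cast
          linarith

theorem ae_tendsto_cumRegret [IsProbabilityMeasure μ] (hm : ∀ t, Measurable (play t))
    (hF : Follows1 μ play P1) (b : Bool) :
    ∀ᵐ ω ∂μ, Tendsto (fun M : ℕ => max (cumRegret b play M ω) 0 / M) atTop (𝓝 0) := by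
  refine ae_tendsto_max_zero_div_of_integral_sq_le (c := 2)
    (integrable_max_cumRegret_sq hm b) (fun t ω => ?_) (fun t => ?_)
  · rw [cumRegret, sum_range_succ, ← cumRegret]
    linarith [(abs_le.1 (abs_switchGain_le_one b (play t ω))).2]
  · refine (integral_mono (integrable_max_cumRegret_sq hm b t)
      (integrable_finsetSum _ fun b _ => integrable_max_cumRegret_sq hm b t) fun ω => ?_).trans
      (integral_potential_le hm hF t)
    exact single_le_sum (f := fun b => max (cumRegret b play t ω) 0 ^ 2)
      (fun _ _ => sq_nonneg _) (mem_univ b)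

theorem follows1_swap {σ : (t : ℕ) → (Fin t → Bool × Bool) → ℝ} (hF : Follows2 μ play σ) :
    Follows1 μ (fun t ω => (play t ω).swap) fun t h => σ t fun m => (h m).swap :=
  fun t f => hF t fun h x => f (fun m => (h m).swap) x

theorem ae_fst_eq_true_of_follows1 [IsProbabilityMeasure μ] (hm : ∀ t, Measurable (play t))
    {σ : (t : ℕ) → (Fin t → Bool × Bool) → ℝ} (hF : Follows1 μ play σ) (t : ℕ)
    (hσ : ∀ᵐ ω ∂μ, σ t (history play t ω) = 1) : ∀ᵐ ω ∂μ, (play t ω).1 = true := by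
  set ind : Ω → ℝ := fun ω => if (play t ω).1 = true then 1 else 0
  have hind : Integrable ind μ := integrable_comp_history hm t fun q => if q.2.1 then 1 else 0
  have hint : ∫ ω, ind ω ∂μ = 1 := by
    have h := hF t fun _ _ => 1
    simp only [mul_one] at h
    rw [h]
    exact (integral_congr_ae hσ).trans (by simp)
  have hzero : (fun ω => 1 - ind ω) =ᵐ[μ] 0 := by
    refine (integral_eq_zero_iff_of_nonneg (fun ω => ?_) ((integrable_const 1).sub hind)).1 ?_
    · by_cases h : (play t ω).1 = true <;> simp [ind, h]
    · exact (integral_sub (integrable_const 1) hind).trans (by simp [hint])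
  filter_upwards [hzero] with ω hω
  by_contra h
  simp [ind, h] at hω

theorem ae_play_eq_true_true [IsProbabilityMeasure μ] (hm : ∀ t, Measurable (play t))
    (hF1 : Follows1 μ play P1) (hF2 : Follows2 μ play P2) (t : ℕ) :
    ∀ᵐ ω ∂μ, play t ω = (true, true) := by
  induction t using Nat.strong_induction_on with
  | _ t ih =>
  have hhist : ∀ᵐ ω ∂μ, history play t ω = fun _ => (true, true) := by
    filter_upwards [ae_all_iff.2 fun s : Fin t => ih s s.2] with ω hω using funext hω
  have h1 := ae_fst_eq_true_of_follows1 hm hF1 t (by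
    filter_upwards [hhist] with ω hω
    rw [hω, P1_const_true_true])
  have h2 := ae_fst_eq_true_of_follows1 (fun t => (hm t).snd.prodMk (hm t).fst)
    (follows1_swap hF2) t (by
      filter_upwards [hhist] with ω hω
      exact (congrArg (P2 t) hω).trans (P1_const_true_true t))
  filter_upwards [h1, h2] with ω h1 h2 using Prod.ext h1 h2

end Play

theorem noRegret1_P1 : NoRegret1 P1 := by
  intro Ω _ μ _ play hm hF b
  filter_upwards [ae_tendsto_cumRegret hm hF b] with ω hω
  convert hω using 2 with M
  rw [← max_div_div_right M.cast_nonneg, zero_div]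
  rfl

theorem noRegret2_P2 : NoRegret2 P2 := by
  intro Ω _ μ hμ play hm hF b
  filter_upwards [noRegret1_P1 Ω _ μ hμ _ (fun t => (hm t).snd.prodMk (hm t).fst)
    (follows1_swap hF) b] with ω hω
  simpa only [Prod.fst_swap, Prod.snd_swap, uL, eq_comm] using hω

end RegretMatching

/-- Counterexample: there exist no-regret strategies for the two learners of the
3-player game `u(T,L)=(1,1,0), u(T,R)=(0,0,0), u(B,L)=(0,0,-1), u(B,R)=(1,1,1)`
(the optimizer, player 3, has a single action) such that the optimizer's expected
cumulative utility is `0` at every horizon, while the pure optimistic Stackelberg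
value of the game is `1 > 0`. -/
theorem optimizer_below_stackelberg_value :
    NoRegret1 P1 ∧ NoRegret2 P2 ∧
      (∀ (Ω : Type) (_ : MeasurableSpace Ω) (μ : Measure Ω),
        IsProbabilityMeasure μ →
        ∀ play : ℕ → Ω → Bool × Bool, (∀ t, Measurable (play t)) →
          Follows1 μ play P1 → Follows2 μ play P2 →
          ∀ M : ℕ, ∫ ω, (∑ t ∈ Finset.range M, u3 (play t ω)) ∂μ = 0) ∧
      -- the pure optimistic Stackelberg value of the game equals 1
      IsGreatest {v | ∃ z : Bool × Bool,
          (∀ b : Bool, uL b z.2 ≤ uL z.1 z.2) ∧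
          (∀ b : Bool, uL z.1 b ≤ uL z.1 z.2) ∧
          v = u3 z} 1 ∧
      (0 : ℝ) < 1 := by
  refine ⟨RegretMatching.noRegret1_P1, RegretMatching.noRegret2_P2, ?_, ⟨?_, ?_⟩, one_pos⟩
  · intro Ω _ μ _ play hm hF1 hF2 M
    refine integral_eq_zero_of_ae ?_
    filter_upwards [ae_all_iff.2 (RegretMatching.ae_play_eq_true_true hm hF1 hF2)] with ω hω
    simp [hω, u3]
  · exact ⟨(false, false), fun b => by cases b <;> simp [uL], fun b => by cases b <;> simp [uL],
      by simp [u3]⟩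
  · rintro v ⟨⟨a, b⟩, -, -, rfl⟩
    cases a <;> cases b <;> norm_num [u3]
end
end

section
/- In the 3-player game with A_1 = {T,B}, A_2 = {L,R}, A_3 = {E} and payoffs u(T,L) = (1,1,0), u(T,R) = (0,0,0), u(B,L) = (0,0,−1), u(B,R) = (1,1,1), if both learners follow the regret-matching strategies (player 1 starting with T and resolving arbitrary choices by p = 1 toward T; player 2 symmetrically toward L), then the realized action profile is (T, L) at every stage t ≥ 1. -/
open MeasureTheory Filter Finset

noncomputable section

lemma P1_const (t : ℕ) : P1 t (fun _ => (true, true)) = 1 := by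
  have h1 : rTB (fun _ : Fin t => (true, true)) ≤ 0 := by
    simp only [rTB]
    apply div_nonpos_of_nonpos_of_nonneg
    · simp
    · exact Nat.cast_nonneg t
  have h2 : rBT (fun _ : Fin t => (true, true)) = 0 := by
    simp [rBT]
  simp [P1, h2, max_eq_right h1]

lemma P2_const (t : ℕ) : P2 t (fun _ => (true, true)) = 1 := by
  have h1 : rLR (fun _ : Fin t => (true, true)) ≤ 0 := by
    simp only [rLR]
    apply div_nonpos_of_nonpos_of_nonneg
    · simp
    · exact Nat.cast_nonneg t
  have h2 : rRL (fun _ : Fin t => (true, true)) = 0 := by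
    simp [rRL]
  simp [P2, h2, max_eq_right h1]

lemma indicator_key {Ω : Type} [MeasurableSpace Ω] (μ : Measure Ω)
    [IsProbabilityMeasure μ] {A B : Set Ω} (hA : MeasurableSet A)
    (hB : MeasurableSet B) (hA1 : μ Aᶜ = 0)
    (heq : ∫ ω, (A ∩ B).indicator (fun _ => (1:ℝ)) ω ∂μ
      = ∫ ω, A.indicator (fun _ => (1:ℝ)) ω ∂μ) : μ Bᶜ = 0 := by
  rw [integral_indicator_const _ (hA.inter hB), integral_indicator_const _ hA] at heq
  simp only [smul_eq_mul, mul_one] at heq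
  have hAB : μ (A ∩ B) = μ A := by
    have h1 : μ (A ∩ B) ≠ ⊤ := measure_ne_top μ _
    have h2 : μ A ≠ ⊤ := measure_ne_top μ _
    exact (ENNReal.toReal_eq_toReal_iff' h1 h2).mp heq
  have hμA : μ A = 1 := by
    have := measure_add_measure_compl (μ := μ) hA
    rw [hA1, add_zero] at this
    rw [this]; exact measure_univ
  have hABfull : μ (A ∩ B) = 1 := hAB.trans hμA
  have : μ (A ∩ B)ᶜ = 0 := by
    have := measure_add_measure_compl (μ := μ) (hA.inter hB)
    rw [hABfull] at this
    have huniv : μ Set.univ = 1 := measure_univ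
    rw [huniv] at this
    exact (ENNReal.add_right_inj ENNReal.one_ne_top).mp (by rw [this, add_zero])
  refine measure_mono_null ?_ this
  rw [Set.compl_inter]
  exact Set.subset_union_right

lemma step_one {Ω : Type} [MeasurableSpace Ω] (μ : Measure Ω)
    [IsProbabilityMeasure μ] (play : ℕ → Ω → Bool × Bool)
    (hmeas : ∀ t, Measurable (play t)) (h1 : Follows1 μ play P1) (t : ℕ)
    (IH : ∀ᵐ ω ∂μ, ∀ s : Fin t, play s.1 ω = (true, true)) :
    ∀ᵐ ω ∂μ, (play t ω).1 = true := by
  classical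
  set A : Set Ω := {ω | ∀ s : Fin t, play s.1 ω = (true, true)} with hAdef
  set B : Set Ω := {ω | (play t ω).1 = true} with hBdef
  have hA : MeasurableSet A := by
    have : A = ⋂ s : Fin t, (play s.1) ⁻¹' {(true, true)} := by
      ext ω; simp [hAdef, Set.mem_iInter]
    rw [this]
    exact MeasurableSet.iInter fun s => (hmeas s.1) (measurableSet_singleton _)
  have hB : MeasurableSet B := by
    have : B = (fun ω => (play t ω).1) ⁻¹' {true} := by ext ω; simp [hBdef]
    rw [this]
    exact (measurable_fst.comp (hmeas t)) (measurableSet_singleton _)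
  have hA1 : μ Aᶜ = 0 := IH
  set f : (Fin t → Bool × Bool) → Bool → ℝ :=
    fun h _ => if (∀ s, h s = (true, true)) then (1:ℝ) else 0 with hfdef
  have hint := h1 t f
  have hL : (fun ω => (if (play t ω).1 = true then (1:ℝ) else 0) *
      f (fun s => play s.1 ω) (play t ω).2)
      = (A ∩ B).indicator (fun _ => (1:ℝ)) := by
    funext ω
    by_cases hb : (play t ω).1 = true <;>
      by_cases ha : ∀ s : Fin t, play s.1 ω = (true, true) <;>
      simp [hfdef, hb, ha, Set.indicator_apply, hAdef, hBdef, Set.mem_inter_iff]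
  have hR : (fun ω => P1 t (fun s => play s.1 ω) * f (fun s => play s.1 ω) (play t ω).2)
      = A.indicator (fun _ => (1:ℝ)) := by
    funext ω
    by_cases ha : ∀ s : Fin t, play s.1 ω = (true, true)
    · have hh : (fun s : Fin t => play s.1 ω) = fun _ => (true, true) := funext ha
      simp [hfdef, ha, hh, P1_const, Set.indicator_apply, hAdef]
    · simp [hfdef, ha, Set.indicator_apply, hAdef]
  rw [hL, hR] at hint
  exact indicator_key μ hA hB hA1 hint

lemma step_two {Ω : Type} [MeasurableSpace Ω] (μ : Measure Ω)
    [IsProbabilityMeasure μ] (play : ℕ → Ω → Bool × Bool)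
    (hmeas : ∀ t, Measurable (play t)) (h2 : Follows2 μ play P2) (t : ℕ)
    (IH : ∀ᵐ ω ∂μ, ∀ s : Fin t, play s.1 ω = (true, true)) :
    ∀ᵐ ω ∂μ, (play t ω).2 = true := by
  classical
  set A : Set Ω := {ω | ∀ s : Fin t, play s.1 ω = (true, true)} with hAdef
  set B : Set Ω := {ω | (play t ω).2 = true} with hBdef
  have hA : MeasurableSet A := by
    have : A = ⋂ s : Fin t, (play s.1) ⁻¹' {(true, true)} := by
      ext ω; simp [hAdef, Set.mem_iInter]
    rw [this]
    exact MeasurableSet.iInter fun s => (hmeas s.1) (measurableSet_singleton _)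
  have hB : MeasurableSet B := by
    have : B = (fun ω => (play t ω).2) ⁻¹' {true} := by ext ω; simp [hBdef]
    rw [this]
    exact (measurable_snd.comp (hmeas t)) (measurableSet_singleton _)
  have hA1 : μ Aᶜ = 0 := IH
  set f : (Fin t → Bool × Bool) → Bool → ℝ :=
    fun h _ => if (∀ s, h s = (true, true)) then (1:ℝ) else 0 with hfdef
  have hint := h2 t f
  have hL : (fun ω => (if (play t ω).2 = true then (1:ℝ) else 0) *
      f (fun s => play s.1 ω) (play t ω).1)
      = (A ∩ B).indicator (fun _ => (1:ℝ)) := by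
    funext ω
    by_cases hb : (play t ω).2 = true <;>
      by_cases ha : ∀ s : Fin t, play s.1 ω = (true, true) <;>
      simp [hfdef, hb, ha, Set.indicator_apply, hAdef, hBdef, Set.mem_inter_iff]
  have hR : (fun ω => P2 t (fun s => play s.1 ω) * f (fun s => play s.1 ω) (play t ω).1)
      = A.indicator (fun _ => (1:ℝ)) := by
    funext ω
    by_cases ha : ∀ s : Fin t, play s.1 ω = (true, true)
    · have hh : (fun s : Fin t => play s.1 ω) = fun _ => (true, true) := funext ha
      simp [hfdef, ha, hh, P2_const, Set.indicator_apply, hAdef]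
    · simp [hfdef, ha, Set.indicator_apply, hAdef]
  rw [hL, hR] at hint
  exact indicator_key μ hA hB hA1 hint

/-- If both learners follow the regret-matching strategies with ties broken
towards `T` resp. `L`, then the realized action profile is `(T,L)` at every
stage, almost surely. -/
theorem play_is_TL_forever
    {Ω : Type} [MeasurableSpace Ω] (μ : Measure Ω) [IsProbabilityMeasure μ]
    (play : ℕ → Ω → Bool × Bool) (hmeas : ∀ t, Measurable (play t))
    (h1 : Follows1 μ play P1) (h2 : Follows2 μ play P2) :
    ∀ᵐ ω ∂μ, ∀ t : ℕ, play t ω = (true, true) := by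
  have H : ∀ t : ℕ, ∀ᵐ ω ∂μ, play t ω = (true, true) := by
    intro t
    induction t using Nat.strong_induction_on with
    | _ t IHt =>
      have IH : ∀ᵐ ω ∂μ, ∀ s : Fin t, play s.1 ω = (true, true) :=
        ae_all_iff.mpr fun s => IHt s.1 s.2
      have ha := step_one μ play hmeas h1 t IH
      have hb := step_two μ play hmeas h2 t IH
      filter_upwards [ha, hb] with ω hω1 hω2
      exact Prod.ext hω1 hω2
  exact ae_all_iff.mpr H
end
end

section
/- If every player in a finite n-player repeated game follows a no-internal-regret strategy, then the distance from the empirical distribution Z_M of action profiles to the set CED(G) of correlated equilibrium distributions converges to 0 almost surely. -/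
open MeasureTheory Filter Finset

noncomputable section

variable {n : ℕ} {A : Fin n → Type*}
  [∀ i, Fintype (A i)] [∀ i, DecidableEq (A i)]

/-- The set of correlated equilibrium distributions of the finite game with
utilities `u`. -/
def CED (u : Fin n → (∀ i, A i) → ℝ) : Set ((∀ i, A i) → ℝ) :=
  {Φ | (∀ z, 0 ≤ Φ z) ∧ (∑ z, Φ z = 1) ∧
    ∀ (i : Fin n) (a b : A i),
      (∑ z, if z i = a then Φ z * (u i (Function.update z i b) - u i z) else 0) ≤ 0}

/-- Empirical distribution of the action profiles played up to stage `M`. -/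
def empDist (play : ℕ → ∀ i, A i) (M : ℕ) : (∀ i, A i) → ℝ :=
  fun z => ((Finset.range M).filter (fun t => play t = z)).card / M

lemma fiber_sum (p : ℕ → ∀ i, A i) (M : ℕ) (f : (∀ i, A i) → ℝ) :
    ∑ z, (((Finset.range M).filter (fun t => p t = z)).card : ℝ) * f z
      = ∑ t ∈ Finset.range M, f (p t) := by
  rw [← Finset.sum_fiberwise' (Finset.range M) p f]
  refine Finset.sum_congr rfl fun z _ => ?_
  rw [Finset.sum_const, nsmul_eq_mul]

lemma empDist_nonneg (p : ℕ → ∀ i, A i) (M : ℕ) (z : ∀ i, A i) :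
    0 ≤ empDist p M z := by
  unfold empDist; positivity

lemma empDist_le_one (p : ℕ → ∀ i, A i) (M : ℕ) (z : ∀ i, A i) :
    empDist p M z ≤ 1 := by
  unfold empDist
  rcases Nat.eq_zero_or_pos M with h | h
  · simp [h]
  · rw [div_le_one (by exact_mod_cast h)]
    exact_mod_cast (Finset.card_filter_le _ _).trans (by simp)

lemma empDist_sum (p : ℕ → ∀ i, A i) {M : ℕ} (hM : 1 ≤ M) :
    ∑ z, empDist p M z = 1 := by
  have key := fiber_sum p M (fun _ => (1 : ℝ))
  simp only [mul_one, Finset.sum_const, Finset.card_range, nsmul_eq_mul] at key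
  unfold empDist
  rw [← Finset.sum_div, key, div_self]
  exact_mod_cast Nat.one_le_iff_ne_zero.mp hM

lemma empDist_regret (u : Fin n → (∀ i, A i) → ℝ) (p : ℕ → ∀ i, A i) (M : ℕ)
    (i : Fin n) (a b : A i) :
    ∑ z, (if z i = a then empDist p M z * (u i (Function.update z i b) - u i z) else 0)
      = (∑ t ∈ Finset.range M,
          if p t i = a then u i (Function.update (p t) i b) - u i (p t) else 0) / M := by
  have key := fiber_sum p M
    (fun z => if z i = a then u i (Function.update z i b) - u i z else 0)
  rw [← key, Finset.sum_div]
  refine Finset.sum_congr rfl fun z _ => ?_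
  unfold empDist
  by_cases h : z i = a
  · simp only [if_pos h, div_mul_eq_mul_div]
  · simp [if_neg h]

lemma continuous_regretF (u : Fin n → (∀ i, A i) → ℝ) (i : Fin n) (a b : A i) :
    Continuous (fun Φ : (∀ i, A i) → ℝ =>
      ∑ z, if z i = a then Φ z * (u i (Function.update z i b) - u i z) else 0) := by
  refine continuous_finset_sum _ fun z _ => ?_
  by_cases h : z i = a
  · simp only [if_pos h]
    exact (continuous_apply z).mul continuous_const
  · simp only [if_neg h]
    exact continuous_const

/-- If every player follows a no-internal-regret strategy, the distance from the
empirical distribution of action profiles to the set of correlated equilibrium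
distributions converges to `0` almost surely. -/
theorem empirical_converges_to_CED
    (u : Fin n → (∀ i, A i) → ℝ)
    [∀ i, MeasurableSpace (A i)]
    {Ω : Type*} [MeasurableSpace Ω] (μ : Measure Ω) [IsProbabilityMeasure μ]
    (play : ℕ → Ω → ∀ i, A i) (hmeas : ∀ t, Measurable (play t))
    -- every player has no internal regret along the play, almost surely
    (hNIR : ∀ (i : Fin n) (a b : A i), ∀ᵐ ω ∂μ,
      limsup (fun M : ℕ => (∑ t ∈ Finset.range M,
        if play t ω i = a then
          u i (Function.update (play t ω) i b) - u i (play t ω) else 0) / M)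
        atTop ≤ 0) :
    ∀ᵐ ω ∂μ, Tendsto
      (fun M : ℕ => Metric.infDist (empDist (fun t => play t ω) M) (CED u))
      atTop (nhds 0) := by
  have hNIR' : ∀ᵐ ω ∂μ, ∀ (i : Fin n) (a : A i) (b : A i),
      limsup (fun M : ℕ => (∑ t ∈ Finset.range M,
        if play t ω i = a then
          u i (Function.update (play t ω) i b) - u i (play t ω) else 0) / M)
        atTop ≤ 0 := by
    rw [ae_all_iff]; intro i
    rw [ae_all_iff]; intro a
    rw [ae_all_iff]; intro b
    exact hNIR i a b
  filter_upwards [hNIR'] with ω hω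
  set p : ℕ → ∀ i, A i := fun t => play t ω with hp
  by_cases hA : Nonempty (∀ i, A i)
  case neg =>
    haveI : IsEmpty (∀ i, A i) := not_nonempty_iff.mp hA
    have hCED : CED u = (∅ : Set ((∀ i, A i) → ℝ)) := by
      ext Φ
      simp only [CED, Set.mem_setOf_eq, Set.mem_empty_iff_false, iff_false]
      rintro ⟨-, h, -⟩
      rw [Finset.univ_eq_empty, Finset.sum_empty] at h
      exact one_ne_zero h.symm
    simp only [hCED, Metric.infDist_empty]
    exact tendsto_const_nhds
  case pos =>
    apply Filter.tendsto_of_subseq_tendsto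
    intro ns hns
    have hK : IsCompact (Set.Icc (0 : (∀ i, A i) → ℝ) 1) := isCompact_Icc
    have hmem : ∀ M, empDist p M ∈ Set.Icc (0 : (∀ i, A i) → ℝ) 1 := by
      intro M
      constructor
      · intro z; exact empDist_nonneg p M z
      · intro z; exact empDist_le_one p M z
    obtain ⟨Φ, hΦK, ms, hms, hlim⟩ := hK.tendsto_subseq (x := fun k => empDist p (ns k)) (fun k => hmem (ns k))
    have hm : Tendsto (fun k => ns (ms k)) atTop atTop :=
      hns.comp hms.tendsto_atTop
    have hlim' : Tendsto (fun k => empDist p (ns (ms k))) atTop (nhds Φ) := hlim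
    -- Φ is a correlated equilibrium distribution
    have hΦ : Φ ∈ CED u := by
      refine ⟨fun z => hΦK.1 z, ?_, ?_⟩
      · -- sum equals 1
        have hc : Continuous (fun Ψ : (∀ i, A i) → ℝ => ∑ z, Ψ z) :=
          continuous_finset_sum _ fun z _ => continuous_apply z
        have h1 : Tendsto (fun k => ∑ z, empDist p (ns (ms k)) z) atTop (nhds (∑ z, Φ z)) :=
          (hc.tendsto Φ).comp hlim'
        have h2 : (fun k => ∑ z, empDist p (ns (ms k)) z) =ᶠ[atTop] fun _ => (1 : ℝ) := by
          filter_upwards [hm.eventually_ge_atTop 1] with k hk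
          exact empDist_sum p hk
        exact tendsto_nhds_unique (h1.congr' h2) tendsto_const_nhds
      · intro i a b
        set d : (∀ i, A i) → ℝ := fun z => u i (Function.update z i b) - u i z with hd
        set f : ℕ → ℝ := fun M =>
          (∑ t ∈ Finset.range M, if p t i = a then d (p t) else 0) / M with hf
        have hg : Tendsto (fun k =>
            ∑ z, if z i = a then empDist p (ns (ms k)) z * d z else 0) atTop
            (nhds (∑ z, if z i = a then Φ z * d z else 0)) :=
          ((continuous_regretF u i a b).tendsto Φ).comp hlim'
        have hgf : ∀ M, (∑ z, if z i = a then empDist p M z * d z else 0) = f M := by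
          intro M; exact empDist_regret u p M i a b
        have hg' : Tendsto (fun k => f (ns (ms k))) atTop
            (nhds (∑ z, if z i = a then Φ z * d z else 0)) := by
          refine hg.congr fun k => hgf _
        -- boundedness of f
        set C : ℝ := ∑ z, |d z| with hC
        have hCnn : 0 ≤ C := Finset.sum_nonneg fun z _ => abs_nonneg _
        have hfle : ∀ M, f M ≤ C := by
          intro M
          rcases Nat.eq_zero_or_pos M with h | h
          · simp [hf, h, hCnn]
          · rw [hf, div_le_iff₀ (by exact_mod_cast h)]
            calc (∑ t ∈ Finset.range M, if p t i = a then d (p t) else 0)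
                ≤ ∑ t ∈ Finset.range M, C := by
                  refine Finset.sum_le_sum fun t _ => ?_
                  have : |if p t i = a then d (p t) else 0| ≤ C := by
                    by_cases hpt : p t i = a
                    · simp only [if_pos hpt]
                      exact Finset.single_le_sum (f := fun z => |d z|)
                        (fun z _ => abs_nonneg _) (Finset.mem_univ _)
                    · simp [hpt, hCnn]
                  exact (le_abs_self _).trans this
              _ = C * M := by simp [mul_comm]
        have hbdd : IsBoundedUnder (· ≤ ·) atTop f :=
          ⟨C, Filter.eventually_map.mpr (Filter.Eventually.of_forall hfle)⟩
        -- conclude via limsup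
        by_contra hpos
        push_neg at hpos
        set L : ℝ := ∑ z, if z i = a then Φ z * d z else 0 with hL
        have hev : ∀ᶠ k in atTop, L / 2 < f (ns (ms k)) :=
          hg'.eventually_const_lt (by linarith)
        have hfreq : ∃ᶠ M in atTop, L / 2 ≤ f M :=
          hm.frequently (hev.frequently.mono fun k hk => le_of_lt hk)
        have := le_limsup_of_frequently_le hfreq hbdd
        have hls := hω i a b
        rw [← hf] at hls
        linarith
    -- conclude convergence of the inf-distance along the subsequence
    refine ⟨ms, ?_⟩
    have h1 : ∀ k, Metric.infDist (empDist p (ns (ms k))) (CED u)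
        ≤ dist (empDist p (ns (ms k))) Φ :=
      fun k => Metric.infDist_le_dist_of_mem hΦ
    have h2 : Tendsto (fun k => dist (empDist p (ns (ms k))) Φ) atTop (nhds 0) :=
      tendsto_iff_dist_tendsto_zero.mp hlim'
    exact squeeze_zero (fun k => Metric.infDist_nonneg) h1 h2
end
end

section
/- If every player in a finite n-player repeated game follows a no-regret (no-external-regret) strategy, then the distance from the empirical distribution Z_M of action profiles to the Hannan set H(G) converges to 0 almost surely. -/
/-!
The average regret of player `i` against the constant deviation `b` over the first `M` stages
is the expected regret `externalRegret u i b` under the empirical distribution, a linear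
functional of it. No regret thus says that each of finitely many continuous functionals has
nonpositive limsup along the empirical distributions, which lie in the compact simplex, and the
Hannan set is the part of the simplex where all of them are nonpositive. By compactness, a point
of the simplex at which the sum of their positive parts is small enough lies within `ε` of the
Hannan set. The argument is pathwise; countably many null sets are then discarded.
-/

open MeasureTheory Filter Finset

noncomputable section

variable {n : ℕ} {A : Fin n → Type*}
  [∀ i, Fintype (A i)] [∀ i, DecidableEq (A i)]

/-- The Hannan set of the finite game with utilities `u`. -/
def HannanSet (u : Fin n → (∀ i, A i) → ℝ) : Set ((∀ i, A i) → ℝ) :=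
  {Φ | (∀ z, 0 ≤ Φ z) ∧ (∑ z, Φ z = 1) ∧
    ∀ (i : Fin n) (b : A i),
      (∑ z, Φ z * (u i (Function.update z i b) - u i z)) ≤ 0}

section CompactApproximation

variable {X α ι : Type*} [PseudoMetricSpace X] {K S : Set X} {l : Filter α} {x : α → X}

theorem tendsto_max_zero_of_limsup_nonpos {u : α → ℝ} (hu : IsBoundedUnder (· ≤ ·) l u)
    (h : limsup u l ≤ 0) : Tendsto (fun a => max (u a) 0) l (nhds 0) := by
  refine tendsto_order.2 ⟨fun c hc => Eventually.of_forall fun a => hc.trans_le (le_max_right _ _),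
    fun c hc => ?_⟩
  filter_upwards [eventually_lt_of_limsup_lt (h.trans_lt hc) hu] with a ha
  exact max_lt ha hc

theorem IsCompact.isBoundedUnder_le_comp {f : X → ℝ} (hK : IsCompact K) (hf : ContinuousOn f K)
    (hx : ∀ᶠ a in l, x a ∈ K) : IsBoundedUnder (· ≤ ·) l (fun a => f (x a)) := by
  obtain ⟨C, hC⟩ := hK.bddAbove_image hf
  exact isBoundedUnder_of_eventually_le (a := C) (hx.mono fun a ha => hC ⟨x a, ha, rfl⟩)

theorem IsCompact.exists_pos_forall_lt_mem_thickening {g : X → ℝ} (hK : IsCompact K)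
    (hg : ContinuousOn g K) (hS : ∀ y ∈ K, g y ≤ 0 → y ∈ S) {ε : ℝ} (hε : 0 < ε) :
    ∃ δ > 0, ∀ y ∈ K, g y < δ → y ∈ Metric.thickening ε S := by
  rcases (K \ Metric.thickening ε S).eq_empty_or_nonempty with hempty | hne
  · exact ⟨1, one_pos, fun y hy _ => by_contra fun hy' => hempty.subset ⟨hy, hy'⟩⟩
  obtain ⟨y₀, ⟨hy₀K, hy₀S⟩, hmin⟩ :=
    (hK.diff Metric.isOpen_thickening).exists_isMinOn hne (hg.mono Set.sdiff_subset)
  refine ⟨g y₀, lt_of_not_ge fun h => hy₀S ?_, fun y hy hlt => by_contra fun hy' => ?_⟩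
  · exact Metric.self_subset_thickening hε _ (hS y₀ hy₀K h)
  · exact (hmin ⟨hy, hy'⟩).not_gt hlt

theorem IsCompact.tendsto_infDist_of_tendsto {g : X → ℝ} (hK : IsCompact K)
    (hg : ContinuousOn g K) (hS : ∀ y ∈ K, g y ≤ 0 → y ∈ S) (hx : ∀ᶠ a in l, x a ∈ K)
    (hgx : Tendsto (fun a => g (x a)) l (nhds 0)) :
    Tendsto (fun a => Metric.infDist (x a) S) l (nhds 0) := by
  refine tendsto_order.2 ⟨fun c hc => Eventually.of_forall fun a =>
    hc.trans_le Metric.infDist_nonneg, fun ε hε => ?_⟩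
  obtain ⟨δ, hδ, hthick⟩ := hK.exists_pos_forall_lt_mem_thickening hg hS hε
  filter_upwards [hx, (tendsto_order.1 hgx).2 δ hδ] with a haK hag
  obtain ⟨y, hy, hdist⟩ := Metric.mem_thickening_iff.1 (hthick _ haK hag)
  exact (Metric.infDist_le_dist_of_mem hy).trans_lt hdist

theorem IsCompact.tendsto_infDist_of_limsup_nonpos [Fintype ι] {f : ι → X → ℝ}
    (hK : IsCompact K) (hf : ∀ i, ContinuousOn (f i) K)
    (hS : ∀ y ∈ K, (∀ i, f i y ≤ 0) → y ∈ S) (hx : ∀ᶠ a in l, x a ∈ K)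
    (hfx : ∀ i, limsup (fun a => f i (x a)) l ≤ 0) :
    Tendsto (fun a => Metric.infDist (x a) S) l (nhds 0) := by
  set g : X → ℝ := fun y => ∑ i, max (f i y) 0
  have hg : ContinuousOn g K :=
    continuousOn_finsetSum _ fun i _ => (hf i).sup continuousOn_const
  have hgS : ∀ y ∈ K, g y ≤ 0 → y ∈ S := fun y hy hgy => hS y hy fun i =>
    max_eq_right_iff.1 <| (sum_eq_zero_iff_of_nonneg fun i _ => le_max_right _ _).1
      (hgy.antisymm (sum_nonneg fun i _ => le_max_right _ _)) i (mem_univ i)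
  have hgx : Tendsto (fun a => g (x a)) l (nhds 0) := by
    simpa using tendsto_finsetSum univ fun i _ =>
      tendsto_max_zero_of_limsup_nonpos (hK.isBoundedUnder_le_comp (hf i) hx) (hfx i)
  exact hK.tendsto_infDist_of_tendsto hg hgS hx hgx

end CompactApproximation

section Game

def externalRegret (u : Fin n → (∀ i, A i) → ℝ) (i : Fin n) (b : A i)
    (Φ : (∀ i, A i) → ℝ) : ℝ :=
  ∑ z, Φ z * (u i (Function.update z i b) - u i z)

-- `n` and `A` are bound afresh so that the section's `DecidableEq` instances are not included.
theorem continuous_externalRegret {n : ℕ} {A : Fin n → Type*} [∀ i, Fintype (A i)]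
    (u : Fin n → (∀ i, A i) → ℝ) (i : Fin n) (b : A i) :
    Continuous (externalRegret u i b) :=
  continuous_finsetSum _ fun z _ => (continuous_apply z).mul continuous_const

theorem empDist_mem_stdSimplex (p : ℕ → ∀ i, A i) {M : ℕ} (hM : M ≠ 0) :
    empDist p M ∈ stdSimplex ℝ (∀ i, A i) := by
  refine ⟨fun z => by unfold empDist; positivity, ?_⟩
  have hfiber : ∑ z, (((range M).filter fun t => p t = z).card : ℝ) = M := by
    exact_mod_cast (card_eq_sum_card_fiberwise fun t _ => mem_univ (p t)).symm.trans
      (card_range M)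
  simp only [empDist, ← sum_div, hfiber]
  exact div_self (Nat.cast_ne_zero.2 hM)

theorem sum_empDist_mul (p : ℕ → ∀ i, A i) (M : ℕ) (g : (∀ i, A i) → ℝ) :
    ∑ z, empDist p M z * g z = (∑ t ∈ range M, g (p t)) / M := by
  rw [← sum_fiberwise_of_maps_to (fun t _ => mem_univ (p t)), sum_div]
  refine sum_congr rfl fun z _ => ?_
  rw [sum_congr rfl fun t ht => congrArg g (mem_filter.1 ht).2, sum_const, nsmul_eq_mul,
    empDist, div_mul_eq_mul_div]

theorem tendsto_infDist_empDist_HannanSet (u : Fin n → (∀ i, A i) → ℝ) (p : ℕ → ∀ i, A i)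
    (hNR : ∀ i b, limsup (fun M : ℕ => (∑ t ∈ range M,
      (u i (Function.update (p t) i b) - u i (p t))) / M) atTop ≤ 0) :
    Tendsto (fun M => Metric.infDist (empDist p M) (HannanSet u)) atTop (nhds 0) := by
  refine (isCompact_stdSimplex ℝ (∀ i, A i)).tendsto_infDist_of_limsup_nonpos
    (f := fun q : Σ i, A i => externalRegret u q.1 q.2)
    (fun q => (continuous_externalRegret u q.1 q.2).continuousOn)
    (fun Φ hΦ hreg => ⟨hΦ.1, hΦ.2, fun i b => hreg ⟨i, b⟩⟩)
    ((eventually_ne_atTop 0).mono fun M hM => empDist_mem_stdSimplex p hM) fun q => ?_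
  simpa only [externalRegret, sum_empDist_mul] using hNR q.1 q.2

end Game

theorem empirical_converges_to_Hannan_general
    (u : Fin n → (∀ i, A i) → ℝ)
    {Ω : Type*} [MeasurableSpace Ω] (μ : Measure Ω)
    (play : ℕ → Ω → ∀ i, A i)
    -- every player has no external regret along the play, almost surely
    (hNR : ∀ (i : Fin n) (b : A i), ∀ᵐ ω ∂μ,
      limsup (fun M : ℕ => (∑ t ∈ Finset.range M,
        (u i (Function.update (play t ω) i b) - u i (play t ω))) / M)
        atTop ≤ 0) :
    ∀ᵐ ω ∂μ, Tendsto
      (fun M : ℕ => Metric.infDist (empDist (fun t => play t ω) M) (HannanSet u))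
      atTop (nhds 0) := by
  filter_upwards [ae_all_iff.2 fun i => ae_all_iff.2 (hNR i)] with ω hω
  exact tendsto_infDist_empDist_HannanSet u (fun t => play t ω) hω

/-- If every player follows a no-(external-)regret strategy, the distance from
the empirical distribution of action profiles to the Hannan set converges to `0`
almost surely. -/
theorem empirical_converges_to_Hannan
    (u : Fin n → (∀ i, A i) → ℝ)
    [∀ i, MeasurableSpace (A i)]
    {Ω : Type*} [MeasurableSpace Ω] (μ : Measure Ω) [IsProbabilityMeasure μ]
    (play : ℕ → Ω → ∀ i, A i) (hmeas : ∀ t, Measurable (play t))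
    -- every player has no external regret along the play, almost surely
    (hNR : ∀ (i : Fin n) (b : A i), ∀ᵐ ω ∂μ,
      limsup (fun M : ℕ => (∑ t ∈ Finset.range M,
        (u i (Function.update (play t ω) i b) - u i (play t ω))) / M)
        atTop ≤ 0) :
    ∀ᵐ ω ∂μ, Tendsto
      (fun M : ℕ => Metric.infDist (empDist (fun t => play t ω) M) (HannanSet u))
      atTop (nhds 0) :=
  empirical_converges_to_Hannan_general u μ play hNR
end
end
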